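/- arXiv:1912.13325 — 2 statements merged into one kernel-verified Lean document; each statement's English description precedes it below -/
import Mathlib

section
/- Assume (r1,r2,r3,r4,i,j,N) is admissible and i + j ≥ r1 + r3 and i + j ≥ r2 + r4 (so m_min = 0). Then F_2^N(r1,r2,i; r3,r4,j) = (−1)^ρ · K_2 · Σ_{n=0}^{m_max} qⁿ · (q^{a1};q)_n (q^{a2};q)_n (q^{a3};q)_n (q^{a4};q)_n / ( (q;q)_n · (q^{b1};q)_n (q^{b2};q)_n (q^{b3};q)_n ), where a1 = (i − r1 − r2)/2 − (N−2), a2 = (i − r3 − r4)/2, a3 = (j − r1 − r4)/2, a4 = (j − r2 − r3)/2, b1 = −ρ − (N−1), b2 = (i + j − r2 − r4)/2 + 1, b3 = (i + j − r1 − r3)/2 + 1 (all integers, and a1 + a2 + a3 + a4 + 1 = b1 + b2 + b3). All Pochhammer factors in the denominators are nonzero for 0 ≤ n ≤ m_max. This is the terminating balanced ₄Φ₃ representation of the type II multiplicity-free 6-j symbol (Statement 3 of the paper, made precise up to the overall sign (−1)^ρ which the paper leaves implicit). -/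
open Finset

/-- The quantum integer `[n] = (tⁿ − t⁻ⁿ)/(t − t⁻¹)`. -/
noncomputable def qint (t : ℝ) (n : ℤ) : ℝ := (t ^ n - t ^ (-n)) / (t - t⁻¹)

/-- The quantum factorial `[n]! = [1][2]⋯[n]`, with `[0]! = 1`
(and value `1` for negative arguments, which never occur below). -/
noncomputable def qfact (t : ℝ) (n : ℤ) : ℝ :=
  ∏ k ∈ Finset.range n.toNat, qint t ((k : ℤ) + 1)

/-- The q-Pochhammer symbol `(x; q)_n = ∏_{s=0}^{n−1} (1 − x qˢ)`. -/
noncomputable def qpoch (x q : ℝ) (n : ℕ) : ℝ :=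
  ∏ s ∈ Finset.range n, (1 - x * q ^ s)

/-- Admissibility of the tuple `(r₁,r₂,r₃,r₄,i,j,N)`. -/
def Admissible (r₁ r₂ r₃ r₄ i j N : ℤ) : Prop :=
  0 ≤ r₁ ∧ 0 ≤ r₂ ∧ 0 ≤ r₃ ∧ 0 ≤ r₄ ∧ 0 ≤ i ∧ 0 ≤ j ∧ 2 ≤ N ∧
  2 ∣ (r₁ + r₂ + i) ∧ 2 ∣ (r₃ + r₄ + i) ∧ 2 ∣ (r₁ + r₄ + j) ∧ 2 ∣ (r₂ + r₃ + j) ∧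
  max |r₁ - r₂| |r₃ - r₄| ≤ i ∧ i ≤ min (r₁ + r₂) (r₃ + r₄) ∧
  max |r₂ - r₃| |r₁ - r₄| ≤ j ∧ j ≤ min (r₂ + r₃) (r₁ + r₄)

/-- `ρ = (r₁+r₂+r₃+r₄)/2`. -/
def rho (r₁ r₂ r₃ r₄ : ℤ) : ℤ := (r₁ + r₂ + r₃ + r₄) / 2

/-- `m_max = (1/2)·min(r₁+r₂−i, r₃+r₄−i, r₁+r₄−j, r₂+r₃−j)`. -/
def mMax (r₁ r₂ r₃ r₄ i j : ℤ) : ℤ :=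
  (min (min (r₁ + r₂ - i) (r₃ + r₄ - i)) (min (r₁ + r₄ - j) (r₂ + r₃ - j))) / 2

/-- `m_min = (1/2)·max(0, r₁+r₃−i−j, r₂+r₄−i−j)`. -/
def mMin (r₁ r₂ r₃ r₄ i j : ℤ) : ℤ :=
  (max 0 (max (r₁ + r₃ - i - j) (r₂ + r₄ - i - j))) / 2

/-- `θ_N(a,b,c)`. -/
noncomputable def theta (t : ℝ) (N a b c : ℤ) : ℝ :=
  Real.sqrt (qfact t ((a + b - c) / 2) * qfact t ((a - b + c) / 2) *
    qfact t ((-a + b + c) / 2) / qfact t ((a + b + c) / 2 + N - 1))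

/-- `K′ = θ_N(r₁,r₂,i)·θ_N(r₃,r₄,i)·θ_N(r₁,r₄,j)·θ_N(r₂,r₃,j)·[N−1]!·[N−2]!`. -/
noncomputable def Kprime (t : ℝ) (N r₁ r₂ r₃ r₄ i j : ℤ) : ℝ :=
  theta t N r₁ r₂ i * theta t N r₃ r₄ i * theta t N r₁ r₄ j * theta t N r₂ r₃ j *
    qfact t (N - 1) * qfact t (N - 2)

/-- The multiplicity-free 6-j expression `F_T^N(r₁,r₂,i; r₃,r₄,j)` of type `T ∈ {1,2}`. -/
noncomputable def F (t : ℝ) (T : ℕ) (N r₁ r₂ i r₃ r₄ j : ℤ) : ℝ :=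
  Kprime t N r₁ r₂ r₃ r₄ i j *
    ∑ m ∈ Finset.Icc (mMin r₁ r₂ r₃ r₄ i j) (mMax r₁ r₂ r₃ r₄ i j),
      (-1 : ℝ) ^ (rho r₁ r₂ r₃ r₄ - m) * qfact t (rho r₁ r₂ r₃ r₄ + N - 1 - m) /
        (qfact t m * qfact t ((r₃ + r₄ - i) / 2 - m) * qfact t ((r₂ + r₃ - j) / 2 - m) *
          qfact t ((r₁ + r₄ - j) / 2 - m) * qfact t ((i + j - r₂ - r₄) / 2 + m) *
          qfact t ((r₁ + r₂ - i) / 2 + (N - 2) * (if T = 2 then 1 else 0) - m) *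
          qfact t ((i + j - r₁ - r₃) / 2 + (N - 2) * (if T = 1 then 1 else 0) + m))

/-- The prefactor `K_T` (for the case `m_min = 0`). -/
noncomputable def Kfac (t : ℝ) (T : ℕ) (N r₁ r₂ i r₃ r₄ j : ℤ) : ℝ :=
  Kprime t N r₁ r₂ r₃ r₄ i j * qfact t (rho r₁ r₂ r₃ r₄ + N - 1) /
    (qfact t ((r₃ + r₄ - i) / 2) *
      qfact t ((r₁ + r₂ - i) / 2 + (N - 2) * (if T = 2 then 1 else 0)) *
      qfact t ((r₂ + r₃ - j) / 2) * qfact t ((r₁ + r₄ - j) / 2) *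
      qfact t ((i + j - r₂ - r₄) / 2) *
      qfact t ((i + j - r₁ - r₃) / 2 + (N - 2) * (if T = 1 then 1 else 0)))

/-!
With `q = t²` one has `1 - q^x = -(t - t⁻¹) tˣ [x]`, so `(q^a; q)_n` is
`(-(t - t⁻¹))ⁿ t^{an} ∏_{s<n} tˢ` times `∏_{s<n} [a + s]`. In a balanced quotient of four such
symbols by four others the prefactors cancel down to `q⁻ⁿ`, and the remaining products of
quantum integers are quotients of quantum factorials. This turns the `n`-th term of the `₄Φ₃`
series into `(-1)ⁿ` times the ratio of the `m = n` and `m = 0` summands of `F`.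
-/

lemma sum_Icc_zero_eq_sum_range {M : Type*} [AddCommMonoid M] (f : ℤ → M) {m : ℤ}
    (hm : 0 ≤ m) :
    ∑ k ∈ Icc 0 m, f k = ∑ n ∈ range (m.toNat + 1), f n := by
  rw [Int.Icc_eq_finset_map, sum_map, sub_zero, show (m + 1).toNat = m.toNat + 1 by omega]
  simp

section

variable {t : ℝ}

lemma qint_neg (n : ℤ) : qint t (-n) = -qint t n := by
  unfold qint; rw [neg_neg]; ring

lemma sub_inv_ne_zero (ht : 0 < t) (ht1 : t ≠ 1) : t - t⁻¹ ≠ 0 := by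
  rw [sub_ne_zero]
  intro h
  have : t * t = 1 := by rw [← mul_inv_cancel₀ ht.ne', ← h]
  rcases mul_self_eq_one_iff.mp this with h | h
  · exact ht1 h
  · linarith

lemma qint_pos (ht : 0 < t) (ht1 : t ≠ 1) {n : ℤ} (hn : 0 < n) : 0 < qint t n := by
  unfold qint
  rcases ht1.lt_or_gt with hlt | hgt
  · have h₁ : t ^ n < t ^ (-n) := zpow_lt_zpow_right_of_lt_one₀ ht hlt (by omega)
    have h₂ : t < t⁻¹ := by rw [lt_inv_comm₀ ht ht]; exact hlt.trans (one_lt_inv₀ ht |>.mpr hlt)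
    exact div_pos_of_neg_of_neg (by linarith) (by linarith)
  · have h₁ : t ^ (-n) < t ^ n := zpow_lt_zpow_right₀ hgt (by omega)
    have h₂ : t⁻¹ < t := (inv_lt_one_of_one_lt₀ hgt).trans hgt
    exact div_pos (by linarith) (by linarith)

lemma qint_ne_zero (ht : 0 < t) (ht1 : t ≠ 1) {n : ℤ} (hn : n ≠ 0) : qint t n ≠ 0 := by
  rcases hn.lt_or_gt with h | h
  · simpa [qint_neg] using (qint_pos ht ht1 (neg_pos.mpr h)).ne'
  · exact (qint_pos ht ht1 h).ne'

lemma qfact_pos (ht : 0 < t) (ht1 : t ≠ 1) (n : ℤ) : 0 < qfact t n :=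
  prod_pos fun _ _ => qint_pos ht ht1 (by positivity)

lemma qfact_add_one {n : ℤ} (hn : 0 ≤ n) : qfact t (n + 1) = qfact t n * qint t (n + 1) := by
  unfold qfact
  rw [show (n + 1).toNat = n.toNat + 1 by omega, prod_range_succ, Int.toNat_of_nonneg hn]

lemma qfact_add_natCast {e : ℤ} (he : 0 ≤ e) (n : ℕ) :
    qfact t (e + n) = qfact t e * ∏ s ∈ range n, qint t (e + 1 + s) := by
  induction n with
  | zero => simp
  | succ n ih =>
    rw [Nat.cast_succ, ← add_assoc, qfact_add_one (by omega), ih, prod_range_succ, mul_assoc]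
    ring_nf

lemma qfact_eq_qfact_sub_mul_prod {a : ℤ} {n : ℕ} (hn : (n : ℤ) ≤ a) :
    qfact t a = qfact t (a - n) * ∏ s ∈ range n, qint t (a - s) := by
  induction n with
  | zero => simp
  | succ n ih =>
    have h := qfact_add_one (t := t) (by omega : 0 ≤ a - (n + 1))
    rw [sub_add_eq_add_sub, add_sub_add_right_eq_sub] at h
    rw [ih (by omega), prod_range_succ, Nat.cast_succ, h]
    ring

lemma one_sub_sq_zpow (ht : t ≠ 0) (hc : t - t⁻¹ ≠ 0) (x : ℤ) :
    1 - (t ^ 2) ^ x = -(t - t⁻¹) * t ^ x * qint t x := by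
  have hx : t ^ x * t ^ (-x) = 1 := by rw [← zpow_add₀ ht, add_neg_cancel, zpow_zero]
  unfold qint
  rw [← zpow_natCast, ← zpow_mul, Nat.cast_ofNat, two_mul, zpow_add₀ ht]
  have hq : (t - t⁻¹) * ((t ^ x - t ^ (-x)) / (t - t⁻¹)) = t ^ x - t ^ (-x) :=
    mul_div_cancel₀ _ hc
  linear_combination t ^ x * hq - hx

lemma qpoch_sq_zpow (ht : t ≠ 0) (hc : t - t⁻¹ ≠ 0) (a : ℤ) (n : ℕ) :
    qpoch ((t ^ 2) ^ a) (t ^ 2) n =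
      (-(t - t⁻¹)) ^ n * (t ^ (n : ℤ)) ^ a * (∏ s ∈ range n, t ^ s) *
        ∏ s ∈ range n, qint t (a + s) := by
  have factor (s : ℕ) :
      1 - (t ^ 2) ^ a * (t ^ 2) ^ s = -(t - t⁻¹) * t ^ a * t ^ s * qint t (a + s) := by
    rw [← zpow_natCast (t ^ 2) s, ← zpow_add₀ (pow_ne_zero 2 ht), one_sub_sq_zpow ht hc,
      zpow_add₀ ht, zpow_natCast]
    ring
  simp only [qpoch, factor, prod_mul_distrib, prod_const, card_range]
  rw [← zpow_natCast (t ^ a), ← zpow_mul, mul_comm a, zpow_mul]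

lemma qpoch_sq_zpow_ne_zero (ht : 0 < t) (ht1 : t ≠ 1) {a : ℤ} {n : ℕ}
    (h : ∀ s < n, a + s ≠ 0) : qpoch ((t ^ 2) ^ a) (t ^ 2) n ≠ 0 := by
  have hc := neg_ne_zero.mpr (sub_inv_ne_zero ht ht1)
  rw [qpoch_sq_zpow ht.ne' (sub_inv_ne_zero ht ht1)]
  refine mul_ne_zero (by positivity) (prod_ne_zero_iff.mpr fun s hs => ?_)
  exact qint_ne_zero ht ht1 (h s (mem_range.mp hs))

lemma mul_prod_qpoch_div_prod_qpoch (ht : t ≠ 0) (hc : t - t⁻¹ ≠ 0)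
    {a₁ a₂ a₃ a₄ b₁ b₂ b₃ b₄ : ℤ} (hbal : a₁ + a₂ + a₃ + a₄ + 2 = b₁ + b₂ + b₃ + b₄) (n : ℕ) :
    (t ^ 2) ^ n * (qpoch ((t ^ 2) ^ a₁) (t ^ 2) n * qpoch ((t ^ 2) ^ a₂) (t ^ 2) n *
        qpoch ((t ^ 2) ^ a₃) (t ^ 2) n * qpoch ((t ^ 2) ^ a₄) (t ^ 2) n) /
      (qpoch ((t ^ 2) ^ b₁) (t ^ 2) n * qpoch ((t ^ 2) ^ b₂) (t ^ 2) n *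
        qpoch ((t ^ 2) ^ b₃) (t ^ 2) n * qpoch ((t ^ 2) ^ b₄) (t ^ 2) n) =
      (∏ s ∈ range n, qint t (a₁ + s)) * (∏ s ∈ range n, qint t (a₂ + s)) *
          (∏ s ∈ range n, qint t (a₃ + s)) * (∏ s ∈ range n, qint t (a₄ + s)) /
        ((∏ s ∈ range n, qint t (b₁ + s)) * (∏ s ∈ range n, qint t (b₂ + s)) *
          (∏ s ∈ range n, qint t (b₃ + s)) * (∏ s ∈ range n, qint t (b₄ + s))) := by
  simp only [qpoch_sq_zpow ht hc]
  set w := t ^ (n : ℤ)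
  set X := (-(t - t⁻¹)) ^ n
  set D := ∏ s ∈ range n, t ^ s
  have hw : w ≠ 0 := zpow_ne_zero _ ht
  have hXD : X * D ≠ 0 := mul_ne_zero (pow_ne_zero _ (neg_ne_zero.mpr hc)) (by positivity)
  have hq : (t ^ 2) ^ n = w ^ (2 : ℤ) := by
    rw [← zpow_natCast, ← zpow_natCast t 2, ← zpow_mul, ← zpow_mul, mul_comm]; rfl
  have hpow : w ^ (2 : ℤ) * (w ^ a₁ * w ^ a₂ * w ^ a₃ * w ^ a₄) =
      w ^ b₁ * w ^ b₂ * w ^ b₃ * w ^ b₄ := by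
    simp only [← zpow_add₀ hw]
    congr 1
    omega
  rw [hq, show ∀ Q₁ Q₂ Q₃ Q₄ R₁ R₂ R₃ R₄ : ℝ,
      w ^ (2 : ℤ) * (X * w ^ a₁ * D * Q₁ * (X * w ^ a₂ * D * Q₂) * (X * w ^ a₃ * D * Q₃) *
        (X * w ^ a₄ * D * Q₄)) / (X * w ^ b₁ * D * R₁ * (X * w ^ b₂ * D * R₂) *
        (X * w ^ b₃ * D * R₃) * (X * w ^ b₄ * D * R₄)) =
      (X * D) ^ 4 * (w ^ (2 : ℤ) * (w ^ a₁ * w ^ a₂ * w ^ a₃ * w ^ a₄)) /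
        ((X * D) ^ 4 * (w ^ b₁ * w ^ b₂ * w ^ b₃ * w ^ b₄)) *
          (Q₁ * Q₂ * Q₃ * Q₄ / (R₁ * R₂ * R₃ * R₄))
      from fun _ _ _ _ _ _ _ _ => by ring, hpow, div_self (by positivity), one_mul]

lemma qfact_natCast (n : ℕ) : qfact t n = ∏ s ∈ range n, qint t (1 + s) := by
  simp only [qfact, Int.toNat_natCast, add_comm (1 : ℤ)]

lemma prod_qint_neg_add (a : ℤ) (n : ℕ) :
    ∏ s ∈ range n, qint t (-a + s) = (-1) ^ n * ∏ s ∈ range n, qint t (a - s) := by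
  simp only [neg_add_eq_sub, ← neg_sub (a : ℤ), qint_neg, prod_neg, card_range]

lemma qfact_quotient_eq_fourPhiThree_term (ht : 0 < t) (ht1 : t ≠ 1)
    {A₁ A₂ A₃ A₄ E₁ E₂ P : ℤ} {n : ℕ}
    (h₁ : (n : ℤ) ≤ A₁) (h₂ : (n : ℤ) ≤ A₂) (h₃ : (n : ℤ) ≤ A₃) (h₄ : (n : ℤ) ≤ A₄)
    (hE₁ : 0 ≤ E₁) (hE₂ : 0 ≤ E₂) (hP : P = A₁ + A₂ + A₃ + A₄ + E₁ + E₂ + 1) :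
    qfact t (P - n) / (qfact t n * qfact t (A₂ - n) * qfact t (A₄ - n) * qfact t (A₃ - n) *
        qfact t (E₁ + n) * qfact t (A₁ - n) * qfact t (E₂ + n)) =
      (-1) ^ n * (qfact t P /
        (qfact t A₂ * qfact t A₁ * qfact t A₄ * qfact t A₃ * qfact t E₁ * qfact t E₂)) *
      ((t ^ 2) ^ n *
        (qpoch ((t ^ 2) ^ (-A₁)) (t ^ 2) n * qpoch ((t ^ 2) ^ (-A₂)) (t ^ 2) n *
          qpoch ((t ^ 2) ^ (-A₃)) (t ^ 2) n * qpoch ((t ^ 2) ^ (-A₄)) (t ^ 2) n) /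
        (qpoch (t ^ 2) (t ^ 2) n * qpoch ((t ^ 2) ^ (-P)) (t ^ 2) n *
          qpoch ((t ^ 2) ^ (E₁ + 1)) (t ^ 2) n * qpoch ((t ^ 2) ^ (E₂ + 1)) (t ^ 2) n)) := by
  have hq : qpoch (t ^ 2) (t ^ 2) n = qpoch ((t ^ 2) ^ (1 : ℤ)) (t ^ 2) n := by rw [zpow_one]
  rw [hq, mul_prod_qpoch_div_prod_qpoch ht.ne' (sub_inv_ne_zero ht ht1) (by omega),
    prod_qint_neg_add, prod_qint_neg_add, prod_qint_neg_add, prod_qint_neg_add,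
    prod_qint_neg_add, ← qfact_natCast]
  have hA₁ := qfact_eq_qfact_sub_mul_prod (t := t) h₁
  have hA₂ := qfact_eq_qfact_sub_mul_prod (t := t) h₂
  have hA₃ := qfact_eq_qfact_sub_mul_prod (t := t) h₃
  have hA₄ := qfact_eq_qfact_sub_mul_prod (t := t) h₄
  have hP' := qfact_eq_qfact_sub_mul_prod (t := t) (show (n : ℤ) ≤ P by omega)
  have hE₁' := qfact_add_natCast (t := t) hE₁ n
  have hE₂' := qfact_add_natCast (t := t) hE₂ n
  have hf (m : ℤ) : qfact t m ≠ 0 := (qfact_pos ht ht1 m).ne'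
  have hp₁ := right_ne_zero_of_mul (hA₁ ▸ hf A₁)
  have hp₂ := right_ne_zero_of_mul (hA₂ ▸ hf A₂)
  have hp₃ := right_ne_zero_of_mul (hA₃ ▸ hf A₃)
  have hp₄ := right_ne_zero_of_mul (hA₄ ▸ hf A₄)
  have hpP := right_ne_zero_of_mul (hP' ▸ hf P)
  have hpE₁ := right_ne_zero_of_mul (hE₁' ▸ hf (E₁ + n))
  have hpE₂ := right_ne_zero_of_mul (hE₂' ▸ hf (E₂ + n))
  rw [hA₁, hA₂, hA₃, hA₄, hP', hE₁', hE₂']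
  rcases neg_one_pow_eq_or ℝ n with h | h <;> rw [h] <;> field_simp [hf]

lemma sum_qfact_quotient_eq_fourPhiThree (ht : 0 < t) (ht1 : t ≠ 1)
    {A₁ A₂ A₃ A₄ E₁ E₂ P M : ℤ} (ρ : ℤ)
    (hM : 0 ≤ M) (h₁ : M ≤ A₁) (h₂ : M ≤ A₂) (h₃ : M ≤ A₃) (h₄ : M ≤ A₄)
    (hE₁ : 0 ≤ E₁) (hE₂ : 0 ≤ E₂) (hP : P = A₁ + A₂ + A₃ + A₄ + E₁ + E₂ + 1) :
    ∑ m ∈ Icc 0 M, (-1 : ℝ) ^ (ρ - m) * qfact t (P - m) /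
        (qfact t m * qfact t (A₂ - m) * qfact t (A₄ - m) * qfact t (A₃ - m) *
          qfact t (E₁ + m) * qfact t (A₁ - m) * qfact t (E₂ + m)) =
      (-1) ^ ρ * (qfact t P /
        (qfact t A₂ * qfact t A₁ * qfact t A₄ * qfact t A₃ * qfact t E₁ * qfact t E₂)) *
      ∑ n ∈ range (M.toNat + 1), (t ^ 2) ^ n *
        (qpoch ((t ^ 2) ^ (-A₁)) (t ^ 2) n * qpoch ((t ^ 2) ^ (-A₂)) (t ^ 2) n *
          qpoch ((t ^ 2) ^ (-A₃)) (t ^ 2) n * qpoch ((t ^ 2) ^ (-A₄)) (t ^ 2) n) /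
        (qpoch (t ^ 2) (t ^ 2) n * qpoch ((t ^ 2) ^ (-P)) (t ^ 2) n *
          qpoch ((t ^ 2) ^ (E₁ + 1)) (t ^ 2) n * qpoch ((t ^ 2) ^ (E₂ + 1)) (t ^ 2) n) := by
  rw [sum_Icc_zero_eq_sum_range _ hM, mul_sum]
  refine sum_congr rfl fun n hn => ?_
  have hn : (n : ℤ) ≤ M := by have := mem_range.mp hn; omega
  rw [mul_div_assoc, qfact_quotient_eq_fourPhiThree_term ht ht1 (by omega) (by omega) (by omega)
    (by omega) hE₁ hE₂ hP, zpow_sub₀ (by norm_num), zpow_natCast]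
  have cancel (C S : ℝ) : (-1 : ℝ) ^ ρ / (-1) ^ n * ((-1) ^ n * C * S) = (-1) ^ ρ * C * S := by
    field_simp
  exact cancel _ _

end

/-- the terminating balanced `₄Φ₃` representation of the type II
multiplicity-free 6-j symbol (with `m_min = 0`), including the balance relation on the
arguments and the nonvanishing of the denominator Pochhammer factors. -/
theorem stmt5 (t : ℝ) (ht : 0 < t) (ht1 : t ≠ 1) (r₁ r₂ r₃ r₄ i j N : ℤ)
    (hadm : Admissible r₁ r₂ r₃ r₄ i j N)
    (hij1 : r₁ + r₃ ≤ i + j) (hij2 : r₂ + r₄ ≤ i + j) :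
    (((i - r₁ - r₂) / 2 - (N - 2)) + ((i - r₃ - r₄) / 2) + ((j - r₁ - r₄) / 2) +
        ((j - r₂ - r₃) / 2) + 1 =
      (-(rho r₁ r₂ r₃ r₄) - (N - 1)) + ((i + j - r₂ - r₄) / 2 + 1) +
        ((i + j - r₁ - r₃) / 2 + 1)) ∧
    (∀ n : ℕ, (n : ℤ) ≤ mMax r₁ r₂ r₃ r₄ i j →
      qpoch (t ^ 2) (t ^ 2) n ≠ 0 ∧
      qpoch ((t ^ 2) ^ (-(rho r₁ r₂ r₃ r₄) - (N - 1))) (t ^ 2) n ≠ 0 ∧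
      qpoch ((t ^ 2) ^ ((i + j - r₂ - r₄) / 2 + 1)) (t ^ 2) n ≠ 0 ∧
      qpoch ((t ^ 2) ^ ((i + j - r₁ - r₃) / 2 + 1)) (t ^ 2) n ≠ 0) ∧
    F t 2 N r₁ r₂ i r₃ r₄ j =
      (-1 : ℝ) ^ (rho r₁ r₂ r₃ r₄) * Kfac t 2 N r₁ r₂ i r₃ r₄ j *
        ∑ n ∈ Finset.range ((mMax r₁ r₂ r₃ r₄ i j).toNat + 1),
          (t ^ 2) ^ n *
            (qpoch ((t ^ 2) ^ ((i - r₁ - r₂) / 2 - (N - 2))) (t ^ 2) n *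
              qpoch ((t ^ 2) ^ ((i - r₃ - r₄) / 2)) (t ^ 2) n *
              qpoch ((t ^ 2) ^ ((j - r₁ - r₄) / 2)) (t ^ 2) n *
              qpoch ((t ^ 2) ^ ((j - r₂ - r₃) / 2)) (t ^ 2) n) /
            (qpoch (t ^ 2) (t ^ 2) n *
              qpoch ((t ^ 2) ^ (-(rho r₁ r₂ r₃ r₄) - (N - 1))) (t ^ 2) n *
              qpoch ((t ^ 2) ^ ((i + j - r₂ - r₄) / 2 + 1)) (t ^ 2) n *
              qpoch ((t ^ 2) ^ ((i + j - r₁ - r₃) / 2 + 1)) (t ^ 2) n) := by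
  obtain ⟨hr₁, hr₂, hr₃, hr₄, -, -, hN, h₁, h₂, h₃, h₄, -, hi, -, hj⟩ := hadm
  rw [le_min_iff] at hi hj
  have hρ : 2 * rho r₁ r₂ r₃ r₄ = r₁ + r₂ + r₃ + r₄ := by unfold rho; omega
  have hM : 0 ≤ mMax r₁ r₂ r₃ r₄ i j ∧ 2 * mMax r₁ r₂ r₃ r₄ i j ≤ r₁ + r₂ - i ∧
      2 * mMax r₁ r₂ r₃ r₄ i j ≤ r₃ + r₄ - i ∧ 2 * mMax r₁ r₂ r₃ r₄ i j ≤ r₁ + r₄ - j ∧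
      2 * mMax r₁ r₂ r₃ r₄ i j ≤ r₂ + r₃ - j := by
    unfold mMax; omega
  refine ⟨by omega, fun n hn => ⟨?_, ?_, ?_, ?_⟩, ?_⟩
  · simpa using qpoch_sq_zpow_ne_zero (a := 1) ht ht1 (n := n) fun s _ => by omega
  iterate 3 exact qpoch_sq_zpow_ne_zero ht ht1 fun s _ => by omega
  have hmin : mMin r₁ r₂ r₃ r₄ i j = 0 := by unfold mMin; omega
  unfold F Kfac
  simp only [hmin, Nat.reduceEqDiff, if_true, if_false, mul_one, mul_zero, add_zero]
  rw [show (i - r₁ - r₂) / 2 - (N - 2) = -((r₁ + r₂ - i) / 2 + (N - 2)) by omega,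
    show (i - r₃ - r₄) / 2 = -((r₃ + r₄ - i) / 2) by omega,
    show (j - r₁ - r₄) / 2 = -((r₁ + r₄ - j) / 2) by omega,
    show (j - r₂ - r₃) / 2 = -((r₂ + r₃ - j) / 2) by omega,
    show -rho r₁ r₂ r₃ r₄ - (N - 1) = -(rho r₁ r₂ r₃ r₄ + N - 1) by ring,
    sum_qfact_quotient_eq_fourPhiThree ht ht1 _ hM.1 (by omega) (by omega) (by omega) (by omega)
      (by omega) (by omega) (by omega)]
  ring
end

section
/- (ρ-Regge symmetry, type I.) Assume (r1,r2,r3,r4,i,j,N) is admissible and r1 + r3 = r2 + r4, and set ρ = (r1+r2+r3+r4)/2. Then the tuple (ρ−r4, ρ−r3, ρ−r2, ρ−r1, i, j, N) is admissible, satisfies (ρ−r4) + (ρ−r2) = (ρ−r3) + (ρ−r1), and F_1^N(r1, r2, i; r3, r4, j) = F_1^N(ρ−r4, ρ−r3, i; ρ−r2, ρ−r1, j). -/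
/-!
When `r₁ + r₃ = r₂ + r₄` we have `ρ = r₁ + r₃ = r₂ + r₄`, so the ρ-Regge transform
`(ρ−r₄, ρ−r₃, ρ−r₂, ρ−r₁)` is just the swap `(r₂, r₁, r₄, r₃)`. This swap permutes the factorials
in each summand of `F_T`; the one factor carrying the shift `N − 2` for `T = 1`,
`[(i+j−r₁−r₃)/2 + N − 2 + m]!`, is sent to itself precisely because `r₁ + r₃ = r₂ + r₄`.
-/

open Finset

theorem theta_comm (t : ℝ) (N a b c : ℤ) : theta t N a b c = theta t N b a c := by
  unfold theta
  rw [show b + a - c = a + b - c by ring, show b - a + c = -a + b + c by ring,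
    show -b + a + c = a - b + c by ring, show b + a + c = a + b + c by ring]
  ring_nf

theorem Kprime_swap (t : ℝ) (N r₁ r₂ r₃ r₄ i j : ℤ) :
    Kprime t N r₂ r₁ r₄ r₃ i j = Kprime t N r₁ r₂ r₃ r₄ i j := by
  unfold Kprime
  rw [theta_comm t N r₂ r₁ i, theta_comm t N r₄ r₃ i]
  ring

theorem rho_swap (r₁ r₂ r₃ r₄ : ℤ) : rho r₂ r₁ r₄ r₃ = rho r₁ r₂ r₃ r₄ := by
  unfold rho; ring_nf

theorem mMin_swap (r₁ r₂ r₃ r₄ i j : ℤ) : mMin r₂ r₁ r₄ r₃ i j = mMin r₁ r₂ r₃ r₄ i j := by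
  unfold mMin; omega

theorem mMax_swap (r₁ r₂ r₃ r₄ i j : ℤ) : mMax r₂ r₁ r₄ r₃ i j = mMax r₁ r₂ r₃ r₄ i j := by
  unfold mMax; omega

theorem Admissible.swap {r₁ r₂ r₃ r₄ i j N : ℤ} (h : Admissible r₁ r₂ r₃ r₄ i j N) :
    Admissible r₂ r₁ r₄ r₃ i j N := by
  simp only [Admissible, max_le_iff, le_min_iff, abs_le] at h ⊢
  omega

theorem F_swap (t : ℝ) (T : ℕ) (N r₁ r₂ r₃ r₄ i j : ℤ) (h : r₁ + r₃ = r₂ + r₄) :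
    F t T N r₂ r₁ i r₄ r₃ j = F t T N r₁ r₂ i r₃ r₄ j := by
  unfold F
  rw [rho_swap, mMin_swap, mMax_swap, Kprime_swap]
  congr 1
  refine Finset.sum_congr rfl fun m _ => ?_
  rw [show r₄ + r₃ - i = r₃ + r₄ - i by ring, show r₂ + r₁ - i = r₁ + r₂ - i by ring,
    show i + j - r₁ - r₃ = i + j - r₂ - r₄ by omega]
  ring

theorem rho_eq_of_add_eq {r₁ r₂ r₃ r₄ : ℤ} (h : r₁ + r₃ = r₂ + r₄) :
    rho r₁ r₂ r₃ r₄ = r₂ + r₄ := by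
  unfold rho; omega

theorem stmt13_general (t : ℝ) (r₁ r₂ r₃ r₄ i j N : ℤ)
    (hadm : Admissible r₁ r₂ r₃ r₄ i j N) (hfus : r₁ + r₃ = r₂ + r₄) :
    Admissible (rho r₁ r₂ r₃ r₄ - r₄) (rho r₁ r₂ r₃ r₄ - r₃) (rho r₁ r₂ r₃ r₄ - r₂)
      (rho r₁ r₂ r₃ r₄ - r₁) i j N ∧
    (rho r₁ r₂ r₃ r₄ - r₄) + (rho r₁ r₂ r₃ r₄ - r₂) =
      (rho r₁ r₂ r₃ r₄ - r₃) + (rho r₁ r₂ r₃ r₄ - r₁) ∧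
    F t 1 N r₁ r₂ i r₃ r₄ j =
      F t 1 N (rho r₁ r₂ r₃ r₄ - r₄) (rho r₁ r₂ r₃ r₄ - r₃) i
        (rho r₁ r₂ r₃ r₄ - r₂) (rho r₁ r₂ r₃ r₄ - r₁) j := by
  have hρ := rho_eq_of_add_eq hfus
  obtain ⟨h₄, h₃, h₂, h₁⟩ : rho r₁ r₂ r₃ r₄ - r₄ = r₂ ∧ rho r₁ r₂ r₃ r₄ - r₃ = r₁ ∧
      rho r₁ r₂ r₃ r₄ - r₂ = r₄ ∧ rho r₁ r₂ r₃ r₄ - r₁ = r₃ := by omega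
  rw [h₁, h₂, h₃, h₄]
  exact ⟨hadm.swap, by omega, (F_swap t 1 N r₁ r₂ r₃ r₄ i j hfus).symm⟩

/-- ρ-Regge symmetry, type I: with `ρ = (r₁+r₂+r₃+r₄)/2`, the tuple
`(ρ−r₄, ρ−r₃, ρ−r₂, ρ−r₁, i, j, N)` is admissible, satisfies the type I fusion relation, and
`F_1^N(r₁,r₂,i;r₃,r₄,j) = F_1^N(ρ−r₄, ρ−r₃, i; ρ−r₂, ρ−r₁, j)`. -/
theorem stmt13 (t : ℝ) (ht : 0 < t) (ht1 : t ≠ 1) (r₁ r₂ r₃ r₄ i j N : ℤ)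
    (hadm : Admissible r₁ r₂ r₃ r₄ i j N) (hfus : r₁ + r₃ = r₂ + r₄) :
    Admissible (rho r₁ r₂ r₃ r₄ - r₄) (rho r₁ r₂ r₃ r₄ - r₃) (rho r₁ r₂ r₃ r₄ - r₂)
      (rho r₁ r₂ r₃ r₄ - r₁) i j N ∧
    (rho r₁ r₂ r₃ r₄ - r₄) + (rho r₁ r₂ r₃ r₄ - r₂) =
      (rho r₁ r₂ r₃ r₄ - r₃) + (rho r₁ r₂ r₃ r₄ - r₁) ∧
    F t 1 N r₁ r₂ i r₃ r₄ j =
      F t 1 N (rho r₁ r₂ r₃ r₄ - r₄) (rho r₁ r₂ r₃ r₄ - r₃) i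
        (rho r₁ r₂ r₃ r₄ - r₂) (rho r₁ r₂ r₃ r₄ - r₁) j :=
  stmt13_general t r₁ r₂ r₃ r₄ i j N hadm hfus
end
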